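/- arXiv:2302.00052 — 2 statements merged into one kernel-verified Lean document; each statement's English description precedes it below -/
import Mathlib

section
/- For any two half-lines $H_1, H_2$ in the plane with common origin such that the clockwise angle from $H_1$ to $H_2$ is strictly less than $\pi$, there exists a line with rational slope (or a vertical line through a lattice point) that intersects both $H_1$ and $H_2$. -/
/-- Clockwise rotation of a planar vector by angle `α`. -/
noncomputable def rotCW (α : ℝ) (u : ℝ × ℝ) : ℝ × ℝ :=
  (Real.cos α * u.1 + Real.sin α * u.2, -Real.sin α * u.1 + Real.cos α * u.2)

/-- Coercion of a lattice point to the plane. -/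
def toR (v : ℤ × ℤ) : ℝ × ℝ := ((v.1 : ℝ), (v.2 : ℝ))

private lemma dot_close (c x y e : ℝ) (hc1 : -1 ≤ c) (hc2 : c ≤ 1)
    (hl : y - e < x) (hr : x < y + e) : c * y - 2 * e < c * x := by
  have he : 0 < e := by linarith
  nlinarith [mul_nonneg (by linarith : (0:ℝ) ≤ 1 + c) (by linarith : (0:ℝ) ≤ x - y + e),
    mul_nonneg (by linarith : (0:ℝ) ≤ 1 - c) (by linarith : (0:ℝ) ≤ y + e - x)]

private lemma ray_line (O u : ℝ × ℝ) (a b N : ℤ)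
    (he : 0 < u.1 * a + u.2 * b) (hN : O.1 * a + O.2 * b < N)
    (p q : ℤ × ℤ) (hp : a * p.1 + b * p.2 = N)
    (hq1 : q.1 = p.1 - b) (hq2 : q.2 = p.2 + a) :
    ∃ t s : ℝ, 0 ≤ t ∧ O + t • u = toR p + s • (toR q - toR p) := by
  have hab : (0:ℝ) < (a:ℝ)^2 + (b:ℝ)^2 := by
    rcases eq_or_ne (a:ℝ) 0 with h | h
    · rcases eq_or_ne (b:ℝ) 0 with h' | h'
      · rw [h, h'] at he; simp at he
      · positivity
    · positivity
  set t : ℝ := ((N : ℝ) - (O.1 * a + O.2 * b)) / (u.1 * a + u.2 * b) with ht'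
  have ht : 0 < t := div_pos (by linarith) he
  have hte : t * (u.1 * a + u.2 * b) = (N:ℝ) - (O.1 * a + O.2 * b) :=
    div_mul_cancel₀ _ (ne_of_gt he)
  have hpR : (a:ℝ) * p.1 + b * p.2 = N := by exact_mod_cast hp
  have horth : (a:ℝ) * ((O.1 + t * u.1) - p.1) + b * ((O.2 + t * u.2) - p.2) = 0 := by
    linear_combination hte - hpR
  set s : ℝ := ((a:ℝ) * ((O.2 + t * u.2) - p.2) - b * ((O.1 + t * u.1) - p.1))
      / ((a:ℝ)^2 + (b:ℝ)^2) with hs'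
  have hs1 : (O.1 + t * u.1) - p.1 = s * (-(b:ℝ)) := by
    rw [hs']; field_simp; linear_combination (a:ℝ) * horth
  have hs2 : (O.2 + t * u.2) - p.2 = s * (a:ℝ) := by
    rw [hs']; field_simp; linear_combination (b:ℝ) * horth
  refine ⟨t, s, le_of_lt ht, ?_⟩
  have hq1R : (q.1 : ℝ) = (p.1 : ℝ) - b := by exact_mod_cast hq1
  have hq2R : (q.2 : ℝ) = (p.2 : ℝ) + a := by exact_mod_cast hq2
  simp only [Prod.ext_iff, Prod.fst_add, Prod.snd_add, Prod.fst_sub, Prod.snd_sub,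
    Prod.smul_fst, Prod.smul_snd, smul_eq_mul, toR]
  constructor
  · rw [hq1R]; linarith [hs1]
  · rw [hq2R]; linarith [hs2]

set_option maxHeartbeats 1600000 in
/-- For any two half-lines with common origin whose clockwise angle is `< π`,
there is a rational line (a line through two distinct lattice points)
intersecting both half-lines. -/
theorem stmt0 (O u₁ u₂ : ℝ × ℝ)
    (h1 : u₁.1 ^ 2 + u₁.2 ^ 2 = 1) (h2 : u₂.1 ^ 2 + u₂.2 ^ 2 = 1)
    (α : ℝ) (hα0 : 0 < α) (hαπ : α < Real.pi) (hrot : u₂ = rotCW α u₁) :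
    ∃ p q : ℤ × ℤ, p ≠ q ∧
      (∃ t s : ℝ, 0 ≤ t ∧ O + t • u₁ = toR p + s • (toR q - toR p)) ∧
      (∃ t s : ℝ, 0 ≤ t ∧ O + t • u₂ = toR p + s • (toR q - toR p)) := by
  -- the dot product of the two directions is cos α
  have hcos : u₁.1 * u₂.1 + u₁.2 * u₂.2 = Real.cos α := by
    rw [hrot]; simp only [rotCW]; linear_combination (Real.cos α) * h1
  have hcosgt : -1 < Real.cos α := by
    have := Real.cos_lt_cos_of_nonneg_of_le_pi (le_of_lt hα0) le_rfl hαπ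
    rwa [Real.cos_pi] at this
  set ε : ℝ := 1 + Real.cos α with hε'
  have hεpos : 0 < ε := by simp only [hε']; linarith
  set v1 : ℝ := u₁.1 + u₂.1 with hv1'
  set v2 : ℝ := u₁.2 + u₂.2 with hv2'
  have hdv1 : u₁.1 * v1 + u₁.2 * v2 = ε := by
    simp only [hv1', hv2', hε']; linear_combination h1 + hcos
  have hdv2 : u₂.1 * v1 + u₂.2 * v2 = ε := by
    simp only [hv1', hv2', hε']; linear_combination h2 + hcos
  -- coordinate bounds
  have b11l : -1 ≤ u₁.1 := by nlinarith [sq_nonneg u₁.2, sq_nonneg (u₁.1 + 1)]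
  have b11r : u₁.1 ≤ 1 := by nlinarith [sq_nonneg u₁.2, sq_nonneg (u₁.1 - 1)]
  have b12l : -1 ≤ u₁.2 := by nlinarith [sq_nonneg u₁.1, sq_nonneg (u₁.2 + 1)]
  have b12r : u₁.2 ≤ 1 := by nlinarith [sq_nonneg u₁.1, sq_nonneg (u₁.2 - 1)]
  have b21l : -1 ≤ u₂.1 := by nlinarith [sq_nonneg u₂.2, sq_nonneg (u₂.1 + 1)]
  have b21r : u₂.1 ≤ 1 := by nlinarith [sq_nonneg u₂.2, sq_nonneg (u₂.1 - 1)]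
  have b22l : -1 ≤ u₂.2 := by nlinarith [sq_nonneg u₂.1, sq_nonneg (u₂.2 + 1)]
  have b22r : u₂.2 ≤ 1 := by nlinarith [sq_nonneg u₂.1, sq_nonneg (u₂.2 - 1)]
  -- choose rational approximations of (v1, v2)
  obtain ⟨r₁, hr₁l, hr₁r⟩ := exists_rat_btwn (show v1 - ε/4 < v1 + ε/4 by linarith)
  obtain ⟨r₂, hr₂l, hr₂r⟩ := exists_rat_btwn (show v2 - ε/4 < v2 + ε/4 by linarith)
  have d11 := dot_close u₁.1 r₁ v1 (ε/4) b11l b11r hr₁l hr₁r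
  have d12 := dot_close u₁.2 r₂ v2 (ε/4) b12l b12r hr₂l hr₂r
  have d21 := dot_close u₂.1 r₁ v1 (ε/4) b21l b21r hr₁l hr₁r
  have d22 := dot_close u₂.2 r₂ v2 (ε/4) b22l b22r hr₂l hr₂r
  have hdot1 : 0 < u₁.1 * (r₁:ℝ) + u₁.2 * (r₂:ℝ) := by simp only [hε'] at d11 d12 hdv1; linarith
  have hdot2 : 0 < u₂.1 * (r₁:ℝ) + u₂.2 * (r₂:ℝ) := by simp only [hε'] at d21 d22 hdv2; linarith
  -- integer normal vector (a, b)
  set a : ℤ := r₁.num * r₂.den with ha'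
  set b : ℤ := r₂.num * r₁.den with hb'
  set D : ℤ := (r₁.den : ℤ) * (r₂.den : ℤ) with hD'
  have hd1 : (r₁.den : ℝ) ≠ 0 := Nat.cast_ne_zero.mpr r₁.den_nz
  have hd2 : (r₂.den : ℝ) ≠ 0 := Nat.cast_ne_zero.mpr r₂.den_nz
  have hDpos : (0:ℝ) < (D:ℝ) := by
    have := r₁.pos
    have := r₂.pos
    simp only [hD']
    push_cast
    positivity
  have haR : (a:ℝ) = (r₁:ℝ) * (D:ℝ) := by
    simp only [ha', hD', Rat.cast_def]
    push_cast
    field_simp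
  have hbR : (b:ℝ) = (r₂:ℝ) * (D:ℝ) := by
    simp only [hb', hD', Rat.cast_def]
    push_cast
    field_simp
  have he₁ : 0 < u₁.1 * (a:ℝ) + u₁.2 * (b:ℝ) := by
    rw [haR, hbR]
    have h := mul_pos hDpos hdot1
    linarith [show u₁.1 * ((r₁:ℝ) * D) + u₁.2 * ((r₂:ℝ) * D) = (D:ℝ) * (u₁.1 * (r₁:ℝ) + u₁.2 * (r₂:ℝ)) from by ring]
  have he₂ : 0 < u₂.1 * (a:ℝ) + u₂.2 * (b:ℝ) := by
    rw [haR, hbR]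
    have h := mul_pos hDpos hdot2
    linarith [show u₂.1 * ((r₁:ℝ) * D) + u₂.2 * ((r₂:ℝ) * D) = (D:ℝ) * (u₂.1 * (r₁:ℝ) + u₂.2 * (r₂:ℝ)) from by ring]
  -- (a, b) ≠ 0
  have hab0 : a ≠ 0 ∨ b ≠ 0 := by
    by_contra h
    push_neg at h
    rw [h.1, h.2] at he₁
    simp at he₁
  -- the constant N of the line
  set g : ℤ := (Int.gcd a b : ℤ) with hg'
  have hgpos : 0 < g := by
    simp only [hg']
    exact_mod_cast Int.gcd_pos_iff.mpr hab0
  have hgR : (0:ℝ) < (g:ℝ) := by exact_mod_cast hgpos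
  set c0 : ℝ := O.1 * a + O.2 * b with hc0'
  set m : ℤ := ⌊c0 / (g:ℝ)⌋ + 1 with hm'
  have hmgt : c0 / (g:ℝ) < (m:ℝ) := by
    simp only [hm']; push_cast; exact Int.lt_floor_add_one _
  have hN : c0 < ((m * g : ℤ) : ℝ) := by
    push_cast
    calc c0 = (c0 / (g:ℝ)) * g := by field_simp
    _ < (m:ℝ) * g := by exact mul_lt_mul_of_pos_right hmgt hgR
  -- lattice points
  set p : ℤ × ℤ := (m * Int.gcdA a b, m * Int.gcdB a b) with hp'
  set q : ℤ × ℤ := (p.1 - b, p.2 + a) with hq'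
  have hpline : a * p.1 + b * p.2 = m * g := by
    simp only [hp', hg']
    linear_combination m * (Int.gcd_eq_gcd_ab a b).symm
  have hpq : p ≠ q := by
    intro h
    rw [Prod.ext_iff] at h
    simp only [hq'] at h
    rcases hab0 with h' | h'
    · exact h' (by linarith [h.2])
    · exact h' (by linarith [h.1])
  exact ⟨p, q, hpq,
    ray_line O u₁ a b (m * g) he₁ hN p q hpline rfl rfl,
    ray_line O u₂ a b (m * g) he₂ hN p q hpline rfl rfl⟩
end

section
/- Let $H_1, H_2$ be half-lines with common origin $O$ determining a wedge with clockwise angle $\pi \leq \alpha \leq 2\pi$ (a large wedge). Then the subgraph of the grid $\mathbb{Z}\times\mathbb{Z}$ spanned by the lattice points in the wedge is connected. -/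
def crossR (u v : ℝ × ℝ) : ℝ := u.1 * v.2 - u.2 * v.1

def largeWedge (O u₁ u₂ : ℝ × ℝ) : Set (ℝ × ℝ) :=
  {p : ℝ × ℝ | crossR u₁ (p - O) ≤ 0 ∨ 0 ≤ crossR u₂ (p - O)}

def adj (W : Set (ℝ × ℝ)) (v w : ℤ × ℤ) : Prop :=
  (v - w = (1, 0) ∨ v - w = (-1, 0) ∨ v - w = (0, 1) ∨ v - w = (0, -1)) ∧
    toR v ∈ W ∧ toR w ∈ W

/-
The wedge is the union of the closed half-planes `crossR u₁ (p - O) ≤ 0` and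
`crossR (-u₂) (p - O) ≤ 0`. The lattice points of a closed half-plane are connected: push two
of them `N` unit steps inward, `N` their taxicab distance, along the unit step on which
`crossR u` decreases by `‖u‖`; since one unit step changes `crossR u` by at most `‖u‖`, the whole
taxicab ball of radius `N` around the first pushed point, which contains the second, then lies in
the half-plane. When `α < 2π` the two half-planes share a lattice point, obtained by rounding a
point far enough out along the bisector; when `α = 2π` the wedge is the whole plane.
-/
open Relation

def IsUnitStep (e : ℤ × ℤ) : Prop :=
  e = (1, 0) ∨ e = (-1, 0) ∨ e = (0, 1) ∨ e = (0, -1)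

def taxicabDist (a b : ℤ × ℤ) : ℕ := (b.1 - a.1).natAbs + (b.2 - a.2).natAbs

def halfPlane (O u : ℝ × ℝ) : Set (ℝ × ℝ) := {p | crossR u (p - O) ≤ 0}

def LatticeConnected (W : Set (ℝ × ℝ)) : Prop :=
  ∀ a b : ℤ × ℤ, toR a ∈ W → toR b ∈ W → ReflTransGen (adj W) a b

section Cross

lemma crossR_sub_eq_add (u x y O : ℝ × ℝ) :
    crossR u (x - O) = crossR u (y - O) + crossR u (x - y) := by
  simp only [crossR, Prod.fst_sub, Prod.snd_sub]; ring

lemma crossR_smul_right (u x : ℝ × ℝ) (c : ℝ) : crossR u (c • x) = c * crossR u x := by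
  simp only [crossR, Prod.smul_fst, Prod.smul_snd, smul_eq_mul]; ring

lemma crossR_neg_left (u x : ℝ × ℝ) : crossR (-u) x = -crossR u x := by
  simp only [crossR, Prod.fst_neg, Prod.snd_neg]; ring

lemma crossR_rotCW_rotCW (α β : ℝ) (u : ℝ × ℝ) :
    crossR (rotCW α u) (rotCW β u) = Real.sin (α - β) * (u.1 ^ 2 + u.2 ^ 2) := by
  simp only [crossR, rotCW, Real.sin_sub]; ring

lemma rotCW_zero (u : ℝ × ℝ) : rotCW 0 u = u := by
  simp [rotCW]

lemma rotCW_two_pi (u : ℝ × ℝ) : rotCW (2 * Real.pi) u = u := by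
  simp [rotCW]

lemma sq_add_sq_rotCW (α : ℝ) (u : ℝ × ℝ) :
    (rotCW α u).1 ^ 2 + (rotCW α u).2 ^ 2 = u.1 ^ 2 + u.2 ^ 2 := by
  simp only [rotCW]
  linear_combination (u.1 ^ 2 + u.2 ^ 2) * Real.sin_sq_add_cos_sq α

lemma norm_le_one_of_sq_add_sq_eq_one {u : ℝ × ℝ} (hu : u.1 ^ 2 + u.2 ^ 2 = 1) : ‖u‖ ≤ 1 := by
  rw [Prod.norm_def, Real.norm_eq_abs, Real.norm_eq_abs, max_le_iff,
    ← sq_le_one_iff_abs_le_one, ← sq_le_one_iff_abs_le_one]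
  constructor <;> nlinarith [sq_nonneg u.1, sq_nonneg u.2]

lemma abs_crossR_le (u x : ℝ × ℝ) : |crossR u x| ≤ ‖u‖ * (|x.1| + |x.2|) := by
  have h1 : |u.1| ≤ ‖u‖ := le_max_left _ _
  have h2 : |u.2| ≤ ‖u‖ := le_max_right _ _
  calc |crossR u x| ≤ |u.1| * |x.2| + |u.2| * |x.1| := by
        rw [crossR, ← abs_mul, ← abs_mul]; exact abs_sub _ _
    _ ≤ ‖u‖ * |x.2| + ‖u‖ * |x.1| := by gcongr
    _ = ‖u‖ * (|x.1| + |x.2|) := by ring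

lemma crossR_toR_sub_le (u : ℝ × ℝ) (a b : ℤ × ℤ) :
    crossR u (toR b - toR a) ≤ ‖u‖ * taxicabDist a b := by
  refine (le_abs_self _).trans ((abs_crossR_le u _).trans_eq ?_)
  simp [toR, taxicabDist]

lemma crossR_toR_add_smul_sub (u : ℝ × ℝ) (a e : ℤ × ℤ) (c : ℤ) :
    crossR u (toR (a + c • e) - toR a) = c * crossR u (toR e) := by
  simp only [crossR, toR, Prod.fst_add, Prod.snd_add, Prod.smul_fst, Prod.smul_snd,
    Prod.fst_sub, Prod.snd_sub, smul_eq_mul]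
  push_cast; ring

end Cross

section LatticePaths

variable {W : Set (ℝ × ℝ)}

instance (W : Set (ℝ × ℝ)) : Std.Symm (adj W) where
  symm v w := by
    rintro ⟨hstep, hv, hw⟩
    refine ⟨?_, hw, hv⟩
    rw [← neg_sub v w]
    rcases hstep with h | h | h | h <;> simp [h]

lemma adj_add_left {v e : ℤ × ℤ} (he : IsUnitStep e) (hv : toR v ∈ W)
    (hve : toR (v + e) ∈ W) : adj W (v + e) v :=
  ⟨by rwa [add_sub_cancel_left], hve, hv⟩

lemma reflTransGen_adj_mono {W' : Set (ℝ × ℝ)} (h : W ⊆ W') {a b : ℤ × ℤ}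
    (hab : ReflTransGen (adj W) a b) : ReflTransGen (adj W') a b :=
  ReflTransGen.mono (fun _ _ ⟨hstep, hv, hw⟩ => ⟨hstep, h hv, h hw⟩) _ _ hab

lemma reflTransGen_adj_of_segment {a e : ℤ × ℤ} (he : IsUnitStep e) {n : ℕ}
    (h : ∀ c ≤ n, toR (a + (c : ℤ) • e) ∈ W) : ReflTransGen (adj W) a (a + (n : ℤ) • e) := by
  induction n with
  | zero => simpa using .refl
  | succ n ih =>
    refine (ih fun c hc => h c (hc.trans n.le_succ)).tail (symm ?_)
    have hsucc : a + ((n + 1 : ℕ) : ℤ) • e = a + (n : ℤ) • e + e := by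
      push_cast; rw [add_smul, one_smul, add_assoc]
    rw [hsucc]
    exact adj_add_left he (h n n.le_succ) (hsucc ▸ h (n + 1) le_rfl)

lemma taxicabDist_add_right (a b w : ℤ × ℤ) : taxicabDist (a + w) (b + w) = taxicabDist a b := by
  simp [taxicabDist]

lemma exists_isUnitStep_taxicabDist_add {a b : ℤ × ℤ} {n : ℕ}
    (hn : taxicabDist a b = n + 1) : ∃ e, IsUnitStep e ∧ taxicabDist (a + e) b = n := by
  unfold IsUnitStep
  unfold taxicabDist at hn ⊢
  rcases lt_trichotomy a.1 b.1 with h | h | h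
  · exact ⟨(1, 0), by simp, by simp; omega⟩
  · rcases lt_trichotomy a.2 b.2 with h' | h' | h'
    · exact ⟨(0, 1), by simp, by simp; omega⟩
    · omega
    · exact ⟨(0, -1), by simp, by simp; omega⟩
  · exact ⟨(-1, 0), by simp, by simp; omega⟩

lemma reflTransGen_adj_of_taxicabDist_le {a b : ℤ × ℤ}
    (h : ∀ p, taxicabDist a p ≤ taxicabDist a b → toR p ∈ W) : ReflTransGen (adj W) a b := by
  induction hn : taxicabDist a b generalizing a with
  | zero =>
    obtain rfl : a = b := by unfold taxicabDist at hn; ext <;> omega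
    rfl
  | succ n ih =>
    obtain ⟨e, he, hen⟩ := exists_isUnitStep_taxicabDist_add hn
    have hball : ∀ p, taxicabDist (a + e) p ≤ n → taxicabDist a p ≤ n + 1 := by
      intro p
      unfold taxicabDist
      rcases he with rfl | rfl | rfl | rfl <;> simp <;> omega
    refine .head (symm (adj_add_left he (h a ?_) (h (a + e) ?_)))
      (ih (fun p hp => h p (hn ▸ hball p (hen ▸ hp))) hen)
    · simp [taxicabDist]
    · rw [hn]; exact hball _ (by simp [taxicabDist])

lemma latticeConnected_univ : LatticeConnected Set.univ :=
  fun _ _ _ _ => reflTransGen_adj_of_taxicabDist_le fun _ _ => Set.mem_univ _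

lemma LatticeConnected.union {W₁ W₂ : Set (ℝ × ℝ)} (h₁ : LatticeConnected W₁)
    (h₂ : LatticeConnected W₂) {z : ℤ × ℤ} (hz : toR z ∈ W₁ ∩ W₂) :
    LatticeConnected (W₁ ∪ W₂) := by
  have to_z : ∀ a, toR a ∈ W₁ ∪ W₂ → ReflTransGen (adj (W₁ ∪ W₂)) a z := by
    rintro a (ha | ha)
    · exact reflTransGen_adj_mono Set.subset_union_left (h₁ a z ha hz.1)
    · exact reflTransGen_adj_mono Set.subset_union_right (h₂ a z ha hz.2)
  exact fun a b ha hb => (to_z a ha).trans (symm (to_z b hb))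

end LatticePaths

lemma exists_isUnitStep_crossR_eq (u : ℝ × ℝ) : ∃ e, IsUnitStep e ∧ crossR u (toR e) = -‖u‖ := by
  rw [Prod.norm_def, Real.norm_eq_abs, Real.norm_eq_abs]
  unfold IsUnitStep
  rcases le_total |u.2| |u.1| with h | h
  · rw [max_eq_left h]
    rcases abs_cases u.1 with ⟨h1, -⟩ | ⟨h1, -⟩
    · exact ⟨(0, -1), by simp, by simp [crossR, toR, h1]⟩
    · exact ⟨(0, 1), by simp, by simp [crossR, toR, h1]⟩
  · rw [max_eq_right h]
    rcases abs_cases u.2 with ⟨h2, -⟩ | ⟨h2, -⟩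
    · exact ⟨(1, 0), by simp, by simp [crossR, toR, h2]⟩
    · exact ⟨(-1, 0), by simp, by simp [crossR, toR, h2]⟩

lemma latticeConnected_halfPlane (O u : ℝ × ℝ) : LatticeConnected (halfPlane O u) := by
  intro a b ha hb
  obtain ⟨e, he, hue⟩ := exists_isUnitStep_crossR_eq u
  set N := taxicabDist a b
  have push : ∀ v, toR v ∈ halfPlane O u → ∀ c : ℕ,
      crossR u (toR (v + (c : ℤ) • e) - O) ≤ -(c * ‖u‖) := by
    intro v hv c
    rw [crossR_sub_eq_add u _ (toR v), crossR_toR_add_smul_sub, hue]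
    have : crossR u (toR v - O) ≤ 0 := hv
    push_cast
    linarith
  have segment : ∀ v, toR v ∈ halfPlane O u →
      ReflTransGen (adj (halfPlane O u)) v (v + (N : ℤ) • e) :=
    fun v hv => reflTransGen_adj_of_segment he fun c _ =>
      (push v hv c).trans (neg_nonpos.2 (by positivity))
  have ball : ReflTransGen (adj (halfPlane O u)) (a + (N : ℤ) • e) (b + (N : ℤ) • e) := by
    refine reflTransGen_adj_of_taxicabDist_le fun p hp => ?_
    rw [taxicabDist_add_right] at hp
    show crossR u (toR p - O) ≤ 0
    rw [crossR_sub_eq_add u _ (toR (a + (N : ℤ) • e))]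
    have hp' : ‖u‖ * taxicabDist (a + (N : ℤ) • e) p ≤ ‖u‖ * N := by gcongr
    linarith [push a ha N, crossR_toR_sub_le u (a + (N : ℤ) • e) p]
  exact ((segment a ha).trans ball).trans (symm (segment b hb))

lemma exists_crossR_toR_sub_le (q : ℝ × ℝ) : ∃ z : ℤ × ℤ, ∀ w, crossR w (toR z - q) ≤ ‖w‖ := by
  refine ⟨(round q.1, round q.2), fun w => (le_abs_self _).trans ((abs_crossR_le w _).trans ?_)⟩
  have h1 := abs_sub_round q.1
  have h2 := abs_sub_round q.2
  rw [abs_sub_comm] at h1 h2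
  refine mul_le_of_le_one_right (norm_nonneg w) ?_
  simp only [toR, Prod.fst_sub, Prod.snd_sub]
  linarith

lemma exists_lattice_mem_halfPlane_inter (O : ℝ × ℝ) {u : ℝ × ℝ} (hu : u.1 ^ 2 + u.2 ^ 2 = 1)
    {α : ℝ} (hα₀ : 0 < α) (hα : α < 2 * Real.pi) :
    ∃ z : ℤ × ℤ, toR z ∈ halfPlane O u ∩ halfPlane O (-rotCW α u) := by
  set v := rotCW (α / 2) u
  set s := Real.sin (α / 2)
  have hs : 0 < s := Real.sin_pos_of_pos_of_lt_pi (by linarith) (by linarith)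
  -- `O + (2 / s) • v` lies at cross distance `2` inside both half-planes; rounding costs `≤ 1`.
  obtain ⟨z, hz⟩ := exists_crossR_toR_sub_le (O + (2 / s) • v)
  have mem : ∀ w, ‖w‖ ≤ 1 → crossR w v = -s → toR z ∈ halfPlane O w := by
    intro w hw hwv
    show crossR w (toR z - O) ≤ 0
    rw [crossR_sub_eq_add w _ (O + (2 / s) • v), add_sub_cancel_left, crossR_smul_right, hwv,
      mul_neg, div_mul_cancel₀ 2 hs.ne']
    linarith [hz w]
  refine ⟨z, mem u (norm_le_one_of_sq_add_sq_eq_one hu) ?_, mem _ ?_ ?_⟩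
  · simpa [rotCW_zero, hu] using crossR_rotCW_rotCW 0 (α / 2) u
  · rw [norm_neg]; exact norm_le_one_of_sq_add_sq_eq_one ((sq_add_sq_rotCW α u).trans hu)
  · rw [crossR_neg_left, crossR_rotCW_rotCW, hu, mul_one, sub_half]

lemma largeWedge_eq_union (O u₁ u₂ : ℝ × ℝ) :
    largeWedge O u₁ u₂ = halfPlane O u₁ ∪ halfPlane O (-u₂) := by
  ext p
  simp only [largeWedge, halfPlane, Set.mem_union, Set.mem_ofPred_eq, crossR_neg_left, neg_nonpos]

lemma largeWedge_self (O u : ℝ × ℝ) : largeWedge O u u = Set.univ :=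
  Set.eq_univ_of_forall fun _ => le_total _ _

theorem stmt7_general (O u₁ u₂ : ℝ × ℝ)
    (h1 : u₁.1 ^ 2 + u₁.2 ^ 2 = 1)
    (α : ℝ) (hα1 : Real.pi ≤ α) (hα2 : α ≤ 2 * Real.pi) (hrot : u₂ = rotCW α u₁) :
    ∀ a b : ℤ × ℤ, toR a ∈ largeWedge O u₁ u₂ → toR b ∈ largeWedge O u₁ u₂ →
      Relation.ReflTransGen (adj (largeWedge O u₁ u₂)) a b := by
  subst hrot
  rcases hα2.lt_or_eq with hlt | rfl
  · obtain ⟨z, hz⟩ := exists_lattice_mem_halfPlane_inter O h1 (by linarith [Real.pi_pos]) hlt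
    rw [largeWedge_eq_union]
    exact (latticeConnected_halfPlane O u₁).union (latticeConnected_halfPlane O _) hz
  · rw [rotCW_two_pi, largeWedge_self]
    exact latticeConnected_univ

/-- The subgraph of the grid spanned by the lattice points of a large wedge
(clockwise angle in `[π, 2π]`) is connected. -/
theorem stmt7 (O u₁ u₂ : ℝ × ℝ)
    (h1 : u₁.1 ^ 2 + u₁.2 ^ 2 = 1) (h2 : u₂.1 ^ 2 + u₂.2 ^ 2 = 1)
    (α : ℝ) (hα1 : Real.pi ≤ α) (hα2 : α ≤ 2 * Real.pi) (hrot : u₂ = rotCW α u₁) :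
    ∀ a b : ℤ × ℤ, toR a ∈ largeWedge O u₁ u₂ → toR b ∈ largeWedge O u₁ u₂ →
      Relation.ReflTransGen (adj (largeWedge O u₁ u₂)) a b :=
  stmt7_general O u₁ u₂ h1 α hα1 hα2 hrot
end
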